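/- Let n ≥ 4, 1 ≤ d ≤ n−3, and let {P₁,P₂,P₃,…,P_{d+4}} be a set partition of [n] with d+4 parts. Then the element {P₁∪{n+1},P₂,P₃,…,P_{d+4}} − {P₁,P₂∪{n+1},P₃,…,P_{d+4}} of ℚSP_{d+1,n+1} lies in R_{d+1,n+1} + π̃*(ℚSP_{d,n}). -/
import Mathlib


/-! Common definitions: free ℚ-vector spaces on finite sets of subsets/partitions of
`[n] = {1,…,n}`, the pairing ⟨Π,T⟩, the maps φ̃, α, β, π̃*, π̃_*, odd, even, γ,
and the relation subspace `R_{d,n}`. -/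

/-- `B` is a set partition of `[n] = {1,…,n}`: the parts are nonempty, pairwise
disjoint, and their union is `{1,…,n}`. -/
def IsPartition (n : ℕ) (B : Finset (Finset ℕ)) : Prop :=
  (∀ P ∈ B, P.Nonempty) ∧ (∀ P ∈ B, ∀ Q ∈ B, P ≠ Q → P ∩ Q = ∅) ∧
    B.sup id = Finset.Icc 1 n

instance (n : ℕ) (B : Finset (Finset ℕ)) : Decidable (IsPartition n B) := by
  unfold IsPartition; infer_instance

/-- `SP_{d,n}`: the set of set partitions of `[n]` into exactly `d+3` nonempty parts. -/
def SPf (d : ℤ) (n : ℕ) : Finset (Finset (Finset ℕ)) :=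
  ((Finset.Icc 1 n).powerset.powerset).filter
    (fun B => IsPartition n B ∧ (B.card : ℤ) = d + 3)

/-- `K^d_n = {T ⊆ [n] : |T| ≥ d+3, |T| ≡ d+3 (mod 2)}`. -/
def Kf (d : ℤ) (n : ℕ) : Finset (Finset ℕ) :=
  (Finset.Icc 1 n).powerset.filter
    (fun T => d + 3 ≤ (T.card : ℤ) ∧ (T.card : ℤ) % 2 = (d + 3) % 2)

/-- The basis vector of the free vector space `ℚS = (↥S → ℚ)` corresponding to `a`
(the zero vector if `a ∉ S`). -/
def bvec {A : Type*} [DecidableEq A] (S : Finset A) (a : A) : ↥S → ℚ :=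
  fun x => if x.val = a then 1 else 0

/-- The pairing `⟨B,T⟩`: `1` if `T` meets every part of `B`, else `0`. -/
def pairPT (B : Finset (Finset ℕ)) (T : Finset ℕ) : ℚ :=
  if ∀ P ∈ B, (P ∩ T).Nonempty then 1 else 0

/-- The linear map `φ̃_{d,n} : ℚSP_{d,n} → ℚK^d_n`, `Π ↦ Σ_{T ∈ K^d_n} ⟨Π,T⟩·T`. -/
noncomputable def phiT (d : ℤ) (n : ℕ) : (↥(SPf d n) → ℚ) →ₗ[ℚ] (↥(Kf d n) → ℚ) :=
  Matrix.mulVecLin (Matrix.of fun T B => pairPT B.val T.val)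

/-- Generic "insert `n+1`" map between free vector spaces on finite families of
subsets of `ℕ`: sends the basis vector of `T` to the basis vector of `T ∪ {n+1}`. -/
noncomputable def insMap (n : ℕ) (S S' : Finset (Finset ℕ)) :
    (↥S → ℚ) →ₗ[ℚ] (↥S' → ℚ) :=
  Matrix.mulVecLin (Matrix.of fun T' T =>
    if T'.val = insert (n+1) T.val then (1 : ℚ) else 0)

/-- Generic "forget `n+1`" map: sends the basis vector of `T` to itself if
`n+1 ∉ T` and to `0` otherwise. -/
noncomputable def resMap (n : ℕ) (S S' : Finset (Finset ℕ)) :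
    (↥S → ℚ) →ₗ[ℚ] (↥S' → ℚ) :=
  Matrix.mulVecLin (Matrix.of fun T' T =>
    if T.val = T'.val ∧ n+1 ∉ T.val then (1 : ℚ) else 0)

/-- `α : ℚK^d_n → ℚK^{d+1}_{n+1}`, `T ↦ T ∪ {n+1}`. -/
noncomputable def alphaK (d : ℤ) (n : ℕ) : (↥(Kf d n) → ℚ) →ₗ[ℚ] (↥(Kf (d+1) (n+1)) → ℚ) :=
  insMap n (Kf d n) (Kf (d+1) (n+1))

/-- `β : ℚK^d_{n+1} → ℚK^d_n`, `T ↦ T` if `n+1 ∉ T`, else `T ↦ 0`. -/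
noncomputable def betaK (d : ℤ) (n : ℕ) : (↥(Kf d (n+1)) → ℚ) →ₗ[ℚ] (↥(Kf d n) → ℚ) :=
  resMap n (Kf d (n+1)) (Kf d n)

/-- `π̃^* : ℚSP_{d,n} → ℚSP_{d+1,n+1}`, `Π ↦ Π ∪ {{n+1}}`. -/
noncomputable def piUp (d : ℤ) (n : ℕ) :
    (↥(SPf d n) → ℚ) →ₗ[ℚ] (↥(SPf (d+1) (n+1)) → ℚ) :=
  Matrix.mulVecLin (Matrix.of fun B' B =>
    if B'.val = insert {n+1} B.val then (1 : ℚ) else 0)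

/-- `π̃_* : ℚSP_{d,n+1} → ℚSP_{d,n}`: a partition `Π` of `[n+1]` goes to `0` if
`{n+1}` is a part of `Π`, and otherwise to `{P \ {n+1} : P ∈ Π}`. -/
noncomputable def piDown (d : ℤ) (n : ℕ) :
    (↥(SPf d (n+1)) → ℚ) →ₗ[ℚ] (↥(SPf d n) → ℚ) :=
  Matrix.mulVecLin (Matrix.of fun B' B =>
    if ({n+1} : Finset ℕ) ∉ B.val ∧
        B'.val = B.val.image (fun P => P.erase (n+1)) then (1 : ℚ) else 0)

/-- The subspace `R_{d,n} ⊆ ℚSP_{d,n}` spanned by the Keel/Kontsevich–Manin type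
relations: for every partition `S` of `[n]` with `d+4` parts and distinct parts
`P₁,P₂,P₃,P₄ ∈ S`, the element
`{P₁∪P₂,…} + {P₃∪P₄,…} − {P₁∪P₃,…} − {P₂∪P₄,…}`. -/
noncomputable def Rsub (d : ℤ) (n : ℕ) : Submodule ℚ (↥(SPf d n) → ℚ) :=
  Submodule.span ℚ { v | ∃ S : Finset (Finset ℕ), ∃ P1 P2 P3 P4 : Finset ℕ,
    IsPartition n S ∧ (S.card : ℤ) = d + 4 ∧
    P1 ∈ S ∧ P2 ∈ S ∧ P3 ∈ S ∧ P4 ∈ S ∧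
    P1 ≠ P2 ∧ P1 ≠ P3 ∧ P1 ≠ P4 ∧ P2 ≠ P3 ∧ P2 ≠ P4 ∧ P3 ≠ P4 ∧
    v = bvec (SPf d n) (insert (P1 ∪ P2) ((S.erase P1).erase P2))
      + bvec (SPf d n) (insert (P3 ∪ P4) ((S.erase P3).erase P4))
      - bvec (SPf d n) (insert (P1 ∪ P3) ((S.erase P1).erase P3))
      - bvec (SPf d n) (insert (P2 ∪ P4) ((S.erase P2).erase P4)) }

/-- `F_n = {(P₁,P₂) : P₁ ∪ P₂ = [n], P₁ ∩ P₂ = ∅, 1 ∈ P₁}`. -/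
def Fset (n : ℕ) : Finset (Finset ℕ × Finset ℕ) :=
  ((Finset.Icc 1 n).powerset ×ˢ (Finset.Icc 1 n).powerset).filter
    (fun p => p.1 ∪ p.2 = Finset.Icc 1 n ∧ p.1 ∩ p.2 = ∅ ∧ 1 ∈ p.1)

/-- `E_n`: subsets of `[n]` of even cardinality. -/
def Eset (n : ℕ) : Finset (Finset ℕ) :=
  (Finset.Icc 1 n).powerset.filter (fun T => T.card % 2 = 0)

/-- `O_n`: subsets of `[n]` of odd cardinality. -/
def Oset (n : ℕ) : Finset (Finset ℕ) :=
  (Finset.Icc 1 n).powerset.filter (fun T => T.card % 2 = 1)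

/-- `odd_n : ℚF_n → ℚO_n`, `(P₁,P₂) ↦ −Σ_{T⊆P₁, |T| odd} T + Σ_{T⊆P₂, |T| odd} T`. -/
noncomputable def oddMap (n : ℕ) : (↥(Fset n) → ℚ) →ₗ[ℚ] (↥(Oset n) → ℚ) :=
  Matrix.mulVecLin (Matrix.of fun T p =>
    (if T.val ⊆ p.val.1 then (-1 : ℚ) else 0) + (if T.val ⊆ p.val.2 then (1 : ℚ) else 0))

/-- `even_n : ℚF_n → ℚE_n`, `(P₁,P₂) ↦ −Σ_{T⊆P₁, |T| even} T − Σ_{T⊆P₂, |T| even} T`. -/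
noncomputable def evenMap (n : ℕ) : (↥(Fset n) → ℚ) →ₗ[ℚ] (↥(Eset n) → ℚ) :=
  Matrix.mulVecLin (Matrix.of fun T p =>
    (if T.val ⊆ p.val.1 then (-1 : ℚ) else 0) + (if T.val ⊆ p.val.2 then (-1 : ℚ) else 0))

/-- `γ : ℚF_n → ℚF_{n+1}`, `(P₁,P₂) ↦ (P₁∪{n+1},P₂) − (P₁,P₂∪{n+1})`. -/
noncomputable def gammaMap (n : ℕ) : (↥(Fset n) → ℚ) →ₗ[ℚ] (↥(Fset (n+1)) → ℚ) :=
  Matrix.mulVecLin (Matrix.of fun q p =>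
    (if q.val = (insert (n+1) p.val.1, p.val.2) then (1 : ℚ) else 0)
    - (if q.val = (p.val.1, insert (n+1) p.val.2) then (1 : ℚ) else 0))

/-- `π̃'_* : ℚF_{n+1} → ℚF_n`, `(P₁,P₂) ↦ (P₁∖{n+1}, P₂∖{n+1})`. -/
noncomputable def piDownF (n : ℕ) : (↥(Fset (n+1)) → ℚ) →ₗ[ℚ] (↥(Fset n) → ℚ) :=
  Matrix.mulVecLin (Matrix.of fun q p =>
    if q.val = (p.val.1.erase (n+1), p.val.2.erase (n+1)) then (1 : ℚ) else 0)

-- helpers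
lemma part_subset {n : ℕ} {S : Finset (Finset ℕ)} (hS : IsPartition n S)
    {P : Finset ℕ} (hP : P ∈ S) : P ⊆ Finset.Icc 1 n := by
  have := Finset.le_sup (f := id) hP
  rw [hS.2.2] at this
  exact this

lemma mem_SPf_of {d : ℤ} {n : ℕ} {T : Finset (Finset ℕ)}
    (hT : IsPartition n T) (hc : (T.card : ℤ) = d + 3) : T ∈ SPf d n := by
  simp only [SPf, Finset.mem_filter, Finset.mem_powerset]
  exact ⟨fun P hP => Finset.mem_powerset.2 (part_subset hT hP), hT, hc⟩

lemma merge_isPartition {n : ℕ} {S : Finset (Finset ℕ)} (hS : IsPartition n S)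
    {A B : Finset ℕ} (hA : A ∈ S) (hB : B ∈ S) (hAB : A ≠ B) :
    IsPartition n (insert (A ∪ B) ((S.erase A).erase B)) := by
  have hBmem : B ∈ S.erase A := Finset.mem_erase.2 ⟨hAB.symm, hB⟩
  have hSeq : S = insert A (insert B ((S.erase A).erase B)) := by
    rw [Finset.insert_erase hBmem, Finset.insert_erase hA]
  refine ⟨?_, ?_, ?_⟩
  · intro P hP
    rcases Finset.mem_insert.1 hP with h | h
    · subst h; exact (hS.1 A hA).mono Finset.subset_union_left
    · exact hS.1 P (Finset.mem_of_mem_erase (Finset.mem_of_mem_erase h))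
  · intro P hP Q hQ hPQ
    rcases Finset.mem_insert.1 hP with h | h <;> rcases Finset.mem_insert.1 hQ with h' | h'
    · exact absurd (h.trans h'.symm) hPQ
    · subst h
      have hQS := Finset.mem_of_mem_erase (Finset.mem_of_mem_erase h')
      have hQA : Q ≠ A := fun e => (Finset.mem_erase.1 (Finset.mem_of_mem_erase h')).1 e
      have hQB : Q ≠ B := fun e => (Finset.mem_erase.1 h').1 e
      rw [Finset.union_inter_distrib_right, hS.2.1 A hA Q hQS (Ne.symm hQA),
        hS.2.1 B hB Q hQS (Ne.symm hQB), Finset.union_empty]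
    · subst h'
      have hPS := Finset.mem_of_mem_erase (Finset.mem_of_mem_erase h)
      have hPA : P ≠ A := fun e => (Finset.mem_erase.1 (Finset.mem_of_mem_erase h)).1 e
      have hPB : P ≠ B := fun e => (Finset.mem_erase.1 h).1 e
      rw [Finset.inter_union_distrib_left, hS.2.1 P hPS A hA hPA,
        hS.2.1 P hPS B hB hPB, Finset.union_empty]
    · exact hS.2.1 P (Finset.mem_of_mem_erase (Finset.mem_of_mem_erase h)) Q
        (Finset.mem_of_mem_erase (Finset.mem_of_mem_erase h')) hPQ
  · rw [← hS.2.2]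
    conv_rhs => rw [hSeq]
    simp only [Finset.sup_insert, id]
    ext a
    simp only [Finset.sup_eq_union, Finset.mem_union]
    tauto

lemma piUp_bvec (d : ℤ) (n : ℕ) {T : Finset (Finset ℕ)} (hT : T ∈ SPf d n) :
    piUp d n (bvec (SPf d n) T) = bvec (SPf (d+1) (n+1)) (insert {n+1} T) := by
  funext B'
  simp only [piUp, Matrix.mulVecLin_apply, Matrix.mulVec, dotProduct,
    Matrix.of_apply, bvec]
  rw [Finset.sum_eq_single (⟨T, hT⟩ : ↥(SPf d n))]
  · simp
  · intro b _ hb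
    have : b.val ≠ T := fun e => hb (Subtype.ext e)
    simp [this]
  · intro h; exact absurd (Finset.mem_univ _) h

lemma merge_card {n : ℕ} {S : Finset (Finset ℕ)} (hS : IsPartition n S)
    {A B : Finset ℕ} (hA : A ∈ S) (hB : B ∈ S) (hAB : A ≠ B) :
    (insert (A ∪ B) ((S.erase A).erase B)).card = S.card - 1 := by
  have hnotin : A ∪ B ∉ (S.erase A).erase B := by
    intro h
    have hmem : A ∪ B ∈ S := Finset.mem_of_mem_erase (Finset.mem_of_mem_erase h)
    have hne : A ∪ B ≠ A := fun e => (Finset.mem_erase.1 (Finset.mem_of_mem_erase h)).1 e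
    have hd := hS.2.1 A hA (A ∪ B) hmem (Ne.symm hne)
    obtain ⟨x, hx⟩ := hS.1 A hA
    have hx2 : x ∈ A ∩ (A ∪ B) := Finset.mem_inter.2 ⟨hx, Finset.mem_union_left _ hx⟩
    rw [hd] at hx2
    exact absurd hx2 (Finset.notMem_empty x)
  have h2le : 2 ≤ S.card := Finset.one_lt_card.2 ⟨A, hA, B, hB, hAB⟩
  rw [Finset.card_insert_of_notMem hnotin,
    Finset.card_erase_of_mem (Finset.mem_erase.2 ⟨Ne.symm hAB, hB⟩),
    Finset.card_erase_of_mem hA]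
  omega

/-- For `n ≥ 4`, `1 ≤ d ≤ n−3` and a partition `S` of `[n]` with
`d+4` parts and distinct parts `P₁ ≠ P₂`, the element
`{P₁∪{n+1},P₂,…} − {P₁,P₂∪{n+1},…}` of `ℚSP_{d+1,n+1}` lies in
`R_{d+1,n+1} + π̃^*(ℚSP_{d,n})`. -/
theorem statement9 (n : ℕ) (d : ℤ) (hn : 4 ≤ n) (hd1 : 1 ≤ d) (hd2 : d ≤ (n : ℤ) - 3)
    (S : Finset (Finset ℕ)) (P1 P2 : Finset ℕ)
    (hS : IsPartition n S) (hcard : (S.card : ℤ) = d + 4)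
    (h1 : P1 ∈ S) (h2 : P2 ∈ S) (h12 : P1 ≠ P2) :
    bvec (SPf (d+1) (n+1)) (insert (insert (n+1) P1) (S.erase P1))
      - bvec (SPf (d+1) (n+1)) (insert (insert (n+1) P2) (S.erase P2))
      ∈ Rsub (d+1) (n+1) ⊔ LinearMap.range (piUp d n) := by
    classical
  have hnp1 : ∀ P ∈ S, (n+1) ∉ P := by
    intro P hP h
    have := part_subset hS hP h
    simp only [Finset.mem_Icc] at this
    omega
  have hs : ({n+1} : Finset ℕ) ∉ S := fun h => hnp1 _ h (Finset.mem_singleton_self _)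
  have hne1 : P1 ≠ ({n+1} : Finset ℕ) := by
    intro e; exact hnp1 _ h1 (e ▸ Finset.mem_singleton_self _)
  have hne2 : P2 ≠ ({n+1} : Finset ℕ) := by
    intro e; exact hnp1 _ h2 (e ▸ Finset.mem_singleton_self _)
  have hcard5 : 5 ≤ S.card := by omega
  obtain ⟨Q, hQee⟩ : ((S.erase P1).erase P2).Nonempty := by
    rw [← Finset.card_pos, Finset.card_erase_of_mem (Finset.mem_erase.2 ⟨h12.symm, h2⟩),
      Finset.card_erase_of_mem h1]
    omega
  have hQ2 : Q ≠ P2 := (Finset.mem_erase.1 hQee).1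
  have hQ1' := Finset.mem_of_mem_erase hQee
  have hQ1 : Q ≠ P1 := (Finset.mem_erase.1 hQ1').1
  have hQ : Q ∈ S := Finset.mem_of_mem_erase hQ1'
  have hneQ : Q ≠ ({n+1} : Finset ℕ) := by
    intro e; exact hnp1 _ hQ (e ▸ Finset.mem_singleton_self _)
  set S' := insert ({n+1} : Finset ℕ) S with hS'def
  have hS' : IsPartition (n+1) S' := by
    refine ⟨?_, ?_, ?_⟩
    · intro P hP
      rcases Finset.mem_insert.1 hP with h | h
      · subst h; exact ⟨n+1, Finset.mem_singleton_self _⟩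
      · exact hS.1 P h
    · intro P hP R hR hPR
      rcases Finset.mem_insert.1 hP with h | h <;> rcases Finset.mem_insert.1 hR with h' | h'
      · exact absurd (h.trans h'.symm) hPR
      · subst h; exact Finset.singleton_inter_of_notMem (hnp1 _ h')
      · subst h'; exact Finset.inter_singleton_of_notMem (hnp1 _ h)
      · exact hS.2.1 P h R h' hPR
    · rw [Finset.sup_insert, id_eq, hS.2.2]
      ext a
      simp only [Finset.sup_eq_union, Finset.mem_union, Finset.mem_singleton, Finset.mem_Icc]
      omega
  have hcardS' : (S'.card : ℤ) = (d + 1) + 4 := by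
    rw [Finset.card_insert_of_notMem hs]; push_cast; omega
  have h1' : P1 ∈ S' := Finset.mem_insert_of_mem h1
  have h2' : P2 ∈ S' := Finset.mem_insert_of_mem h2
  have hQ' : Q ∈ S' := Finset.mem_insert_of_mem hQ
  have hr1 : bvec (SPf (d+1) (n+1)) (insert (P1 ∪ {n+1}) ((S'.erase P1).erase {n+1}))
      + bvec (SPf (d+1) (n+1)) (insert (P2 ∪ Q) ((S'.erase P2).erase Q))
      - bvec (SPf (d+1) (n+1)) (insert (P1 ∪ P2) ((S'.erase P1).erase P2))
      - bvec (SPf (d+1) (n+1)) (insert ({n+1} ∪ Q) ((S'.erase {n+1}).erase Q))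
      ∈ Rsub (d+1) (n+1) :=
    Submodule.subset_span ⟨S', P1, {n+1}, P2, Q, hS', hcardS',
      h1', Finset.mem_insert_self _ _, h2', hQ',
      hne1, h12, Ne.symm hQ1, Ne.symm hne2, Ne.symm hneQ, Ne.symm hQ2, rfl⟩
  have hr2 : bvec (SPf (d+1) (n+1)) (insert (P2 ∪ {n+1}) ((S'.erase P2).erase {n+1}))
      + bvec (SPf (d+1) (n+1)) (insert (P1 ∪ Q) ((S'.erase P1).erase Q))
      - bvec (SPf (d+1) (n+1)) (insert (P2 ∪ P1) ((S'.erase P2).erase P1))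
      - bvec (SPf (d+1) (n+1)) (insert ({n+1} ∪ Q) ((S'.erase {n+1}).erase Q))
      ∈ Rsub (d+1) (n+1) :=
    Submodule.subset_span ⟨S', P2, {n+1}, P1, Q, hS', hcardS',
      h2', Finset.mem_insert_self _ _, h1', hQ',
      hne2, h12.symm, Ne.symm hQ2, Ne.symm hne1, Ne.symm hneQ, Ne.symm hQ1, rfl⟩
  have E1 : insert (P1 ∪ {n+1}) ((S'.erase P1).erase {n+1})
      = insert (insert (n+1) P1) (S.erase P1) := by
    have e1 : P1 ∪ ({n+1} : Finset ℕ) = insert (n+1) P1 := by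
      ext a; simp [or_comm]
    rw [e1, hS'def, Finset.erase_insert_of_ne (Ne.symm hne1),
      Finset.erase_insert (fun h => hs (Finset.mem_of_mem_erase h))]
  have E1' : insert (P2 ∪ {n+1}) ((S'.erase P2).erase {n+1})
      = insert (insert (n+1) P2) (S.erase P2) := by
    have e1 : P2 ∪ ({n+1} : Finset ℕ) = insert (n+1) P2 := by
      ext a; simp [or_comm]
    rw [e1, hS'def, Finset.erase_insert_of_ne (Ne.symm hne2),
      Finset.erase_insert (fun h => hs (Finset.mem_of_mem_erase h))]
  have E2 : insert (P2 ∪ Q) ((S'.erase P2).erase Q)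
      = insert {n+1} (insert (P2 ∪ Q) ((S.erase P2).erase Q)) := by
    rw [hS'def, Finset.erase_insert_of_ne (Ne.symm hne2),
      Finset.erase_insert_of_ne (Ne.symm hneQ), Finset.insert_comm]
  have E2' : insert (P1 ∪ Q) ((S'.erase P1).erase Q)
      = insert {n+1} (insert (P1 ∪ Q) ((S.erase P1).erase Q)) := by
    rw [hS'def, Finset.erase_insert_of_ne (Ne.symm hne1),
      Finset.erase_insert_of_ne (Ne.symm hneQ), Finset.insert_comm]
  have E3 : insert (P2 ∪ P1) ((S'.erase P2).erase P1)
      = insert (P1 ∪ P2) ((S'.erase P1).erase P2) := by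
    rw [Finset.union_comm, Finset.erase_right_comm]
  have hT1 : insert (P1 ∪ Q) ((S.erase P1).erase Q) ∈ SPf d n := by
    refine mem_SPf_of (merge_isPartition hS h1 hQ (Ne.symm hQ1)) ?_
    rw [merge_card hS h1 hQ (Ne.symm hQ1)]
    omega
  have hT2 : insert (P2 ∪ Q) ((S.erase P2).erase Q) ∈ SPf d n := by
    refine mem_SPf_of (merge_isPartition hS h2 hQ (Ne.symm hQ2)) ?_
    rw [merge_card hS h2 hQ (Ne.symm hQ2)]
    omega
  have key : bvec (SPf (d+1) (n+1)) (insert (insert (n+1) P1) (S.erase P1))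
      - bvec (SPf (d+1) (n+1)) (insert (insert (n+1) P2) (S.erase P2))
      = (bvec (SPf (d+1) (n+1)) (insert (P1 ∪ {n+1}) ((S'.erase P1).erase {n+1}))
          + bvec (SPf (d+1) (n+1)) (insert (P2 ∪ Q) ((S'.erase P2).erase Q))
          - bvec (SPf (d+1) (n+1)) (insert (P1 ∪ P2) ((S'.erase P1).erase P2))
          - bvec (SPf (d+1) (n+1)) (insert ({n+1} ∪ Q) ((S'.erase {n+1}).erase Q)))
        - (bvec (SPf (d+1) (n+1)) (insert (P2 ∪ {n+1}) ((S'.erase P2).erase {n+1}))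
          + bvec (SPf (d+1) (n+1)) (insert (P1 ∪ Q) ((S'.erase P1).erase Q))
          - bvec (SPf (d+1) (n+1)) (insert (P2 ∪ P1) ((S'.erase P2).erase P1))
          - bvec (SPf (d+1) (n+1)) (insert ({n+1} ∪ Q) ((S'.erase {n+1}).erase Q)))
        + piUp d n (bvec (SPf d n) (insert (P1 ∪ Q) ((S.erase P1).erase Q))
            - bvec (SPf d n) (insert (P2 ∪ Q) ((S.erase P2).erase Q))) := by
    rw [map_sub, piUp_bvec d n hT1, piUp_bvec d n hT2, E1, E1', E2, E2', E3]
    abel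
  rw [key]
  exact Submodule.add_mem _
    (Submodule.mem_sup_left (Submodule.sub_mem _ hr1 hr2))
    (Submodule.mem_sup_right ⟨_, rfl⟩)
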